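/- arXiv:2604.24605 — 8 statements merged into one kernel-verified Lean document; each statement's English description precedes it below -/
import Mathlib

section
/- Let v* be the unique global minimizer of f(v) := F(v) + ½‖v‖² and let ξ := f(v*). Then: (i) ξ ≤ 0; (ii) ξ = 0 if and only if v* = 0, and these hold if and only if there is no v ∈ ℝⁿ with F(v) < 0; (iii) if ξ < 0, then v* ≠ 0 and F(v*) < 0. -/
open RealInnerProductSpace

/-- Componentwise absolute value `|v| = (|v₁|, …, |vₙ|)` of a vector in `ℝⁿ`. -/
noncomputable def vabs {n : ℕ} (v : EuclideanSpace ℝ (Fin n)) : EuclideanSpace ℝ (Fin n) :=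
  WithLp.toLp 2 (fun j => |v j|)

/-- Maximum of finitely many reals indexed by a nonempty `Fin m`. -/
noncomputable def fsup {m : ℕ} (hm : 0 < m) (f : Fin m → ℝ) : ℝ :=
  Finset.univ.sup' (Finset.univ_nonempty_iff.mpr (Fin.pos_iff_nonempty.mp hm)) f

/-- Upper endpoint function `ḡᵢ(v) = ½⟨aᵢ + bᵢ, v⟩ + ½⟨bᵢ − aᵢ, |v|⟩`. -/
noncomputable def gbar {n m : ℕ} (a b : Fin m → EuclideanSpace ℝ (Fin n)) (i : Fin m)
    (v : EuclideanSpace ℝ (Fin n)) : ℝ :=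
  (1 / 2) * ⟪a i + b i, v⟫ + (1 / 2) * ⟪b i - a i, vabs v⟫

/-- `F(v) = max_{1 ≤ i ≤ m} ḡᵢ(v)`. -/
noncomputable def Fmax {n m : ℕ} (hm : 0 < m) (a b : Fin m → EuclideanSpace ℝ (Fin n))
    (v : EuclideanSpace ℝ (Fin n)) : ℝ :=
  fsup hm fun i => gbar a b i v

/-!
`F` is positively homogeneous: `F (t • v) = t * F v` for `t ≥ 0`. Hence `F 0 = 0`, so the
minimum `ξ` of `f = F + ½‖·‖²` is at most `f 0 = 0`. If `F v < 0`, then along the ray `t ↦ t • v`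
the linear term `t * F v` beats the quadratic `½ t² ‖v‖²` for small `t > 0`, so `ξ < 0`. Conversely, if `F ≥ 0` everywhere then `ξ ≥ ½‖v*‖² ≥ 0`, forcing `ξ = 0` and `v* = 0`.
-/

def IsPosHomogeneous {E : Type*} [AddCommGroup E] [Module ℝ E] (F : E → ℝ) : Prop :=
  ∀ t : ℝ, 0 ≤ t → ∀ v, F (t • v) = t * F v

namespace IsPosHomogeneous

variable {E : Type*} [NormedAddCommGroup E] [NormedSpace ℝ E] {F : E → ℝ}

theorem map_zero (hF : IsPosHomogeneous F) : F 0 = 0 := by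
  simpa using hF 0 le_rfl 0

theorem exists_add_half_norm_sq_neg (hF : IsPosHomogeneous F) {v : E} (hv : F v < 0) :
    ∃ w, F w + 1 / 2 * ‖w‖ ^ 2 < 0 := by
  set t := -F v / (‖v‖ ^ 2 + 1)
  have ht : 0 < t := div_pos (neg_pos.mpr hv) (by positivity)
  have htv : t * ‖v‖ ^ 2 < -F v := by
    calc t * ‖v‖ ^ 2 < t * (‖v‖ ^ 2 + 1) := by gcongr; linarith
      _ = -F v := div_mul_cancel₀ _ (by positivity)
  refine ⟨t • v, ?_⟩
  rw [hF t ht.le, norm_smul, Real.norm_of_nonneg ht.le]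
  nlinarith

variable (hF : IsPosHomogeneous F) {vstar : E}
  (hmin : ∀ w, F vstar + 1 / 2 * ‖vstar‖ ^ 2 ≤ F w + 1 / 2 * ‖w‖ ^ 2)
include hF hmin

theorem min_value_nonpos : F vstar + 1 / 2 * ‖vstar‖ ^ 2 ≤ 0 := by
  simpa [hF.map_zero] using hmin 0

theorem min_value_eq_zero_iff_forall_nonneg :
    F vstar + 1 / 2 * ‖vstar‖ ^ 2 = 0 ↔ ∀ v, 0 ≤ F v := by
  constructor
  · intro hξ v
    by_contra! hv
    obtain ⟨w, hw⟩ := hF.exists_add_half_norm_sq_neg hv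
    linarith [hmin w]
  · intro hnonneg
    linarith [hnonneg vstar, hF.min_value_nonpos hmin, sq_nonneg ‖vstar‖]

theorem min_value_eq_zero_iff_eq_zero : F vstar + 1 / 2 * ‖vstar‖ ^ 2 = 0 ↔ vstar = 0 := by
  constructor
  · intro hξ
    have hF_vstar := (hF.min_value_eq_zero_iff_forall_nonneg hmin).mp hξ vstar
    have : ‖vstar‖ ^ 2 = 0 := by linarith [sq_nonneg ‖vstar‖]
    simpa using this
  · rintro rfl
    simp [hF.map_zero]

end IsPosHomogeneous

section Fmax

variable {n m : ℕ} (hm : 0 < m) (a b : Fin m → EuclideanSpace ℝ (Fin n))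

lemma vabs_smul_of_nonneg {t : ℝ} (ht : 0 ≤ t) (v : EuclideanSpace ℝ (Fin n)) :
    vabs (t • v) = t • vabs v := by
  ext j
  simp [vabs, abs_mul, abs_of_nonneg ht]

lemma isPosHomogeneous_gbar (i : Fin m) : IsPosHomogeneous (gbar a b i) := by
  intro t ht v
  rw [gbar, gbar, vabs_smul_of_nonneg ht, real_inner_smul_right, real_inner_smul_right]
  ring

lemma isPosHomogeneous_Fmax : IsPosHomogeneous (Fmax hm a b) := by
  intro t ht v
  simp only [Fmax, fsup, isPosHomogeneous_gbar a b _ t ht v]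
  exact (Finset.apply_sup'_eq_sup'_comp _ (fun x => t * x)
    (fun x y => mul_max_of_nonneg x y ht)).symm

end Fmax

theorem descent_direction_lemma_general {n m : ℕ} (hm : 0 < m)
    (a b : Fin m → EuclideanSpace ℝ (Fin n))
    (vstar : EuclideanSpace ℝ (Fin n))
    (hmin : ∀ w, Fmax hm a b vstar + (1 / 2) * ‖vstar‖ ^ 2 ≤
      Fmax hm a b w + (1 / 2) * ‖w‖ ^ 2) :
    Fmax hm a b vstar + (1 / 2) * ‖vstar‖ ^ 2 ≤ 0 ∧
    (Fmax hm a b vstar + (1 / 2) * ‖vstar‖ ^ 2 = 0 ↔ vstar = 0) ∧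
    (Fmax hm a b vstar + (1 / 2) * ‖vstar‖ ^ 2 = 0 ↔
      ¬ ∃ v : EuclideanSpace ℝ (Fin n), Fmax hm a b v < 0) ∧
    (Fmax hm a b vstar + (1 / 2) * ‖vstar‖ ^ 2 < 0 →
      vstar ≠ 0 ∧ Fmax hm a b vstar < 0) := by
  have hF := isPosHomogeneous_Fmax hm a b
  have hzero := hF.min_value_eq_zero_iff_eq_zero hmin
  refine ⟨hF.min_value_nonpos hmin, hzero, ?_, fun hξ => ⟨?_, ?_⟩⟩
  · simpa using hF.min_value_eq_zero_iff_forall_nonneg hmin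
  · exact fun h => hξ.ne (hzero.mpr h)
  · nlinarith [sq_nonneg ‖vstar‖]

/-- Descent-direction-finding lemma, parts (i)–(iii): with `v*` the global minimizer
of `f(v) = F(v) + ½‖v‖²` and `ξ = f(v*)`, one has `ξ ≤ 0`; `ξ = 0` iff `v* = 0` iff
there is no `v` with `F(v) < 0`; and if `ξ < 0` then `v* ≠ 0` and `F(v*) < 0`. -/
theorem descent_direction_lemma {n m : ℕ} (hm : 0 < m)
    (a b : Fin m → EuclideanSpace ℝ (Fin n)) (hab : ∀ i j, a i j ≤ b i j)
    (vstar : EuclideanSpace ℝ (Fin n))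
    (hmin : ∀ w, Fmax hm a b vstar + (1 / 2) * ‖vstar‖ ^ 2 ≤
      Fmax hm a b w + (1 / 2) * ‖w‖ ^ 2) :
    Fmax hm a b vstar + (1 / 2) * ‖vstar‖ ^ 2 ≤ 0 ∧
    (Fmax hm a b vstar + (1 / 2) * ‖vstar‖ ^ 2 = 0 ↔ vstar = 0) ∧
    (Fmax hm a b vstar + (1 / 2) * ‖vstar‖ ^ 2 = 0 ↔
      ¬ ∃ v : EuclideanSpace ℝ (Fin n), Fmax hm a b v < 0) ∧
    (Fmax hm a b vstar + (1 / 2) * ‖vstar‖ ^ 2 < 0 →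
      vstar ≠ 0 ∧ Fmax hm a b vstar < 0) :=
  descent_direction_lemma_general hm a b vstar hmin
end

section
/- Let H be a real inner product space and let u, w ∈ H with ‖u‖ = ‖w‖. Then for every real number δ ≥ 0, ‖u − w‖ ≤ 2‖u − δw‖. -/
theorem norm_smul_sub_self_le_norm_sub_smul {E : Type*} [SeminormedAddCommGroup E]
    [NormedSpace ℝ E] {u w : E} (h : ‖u‖ = ‖w‖) {δ : ℝ} (hδ : 0 ≤ δ) :
    ‖δ • w - w‖ ≤ ‖u - δ • w‖ := by
  have smul_sub_self_eq : δ • w - w = (δ - 1) • w := by rw [sub_smul, one_smul]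
  calc ‖δ • w - w‖ = |‖δ • w‖ - ‖u‖| := by
        rw [smul_sub_self_eq, norm_smul, norm_smul, Real.norm_of_nonneg hδ, h, Real.norm_eq_abs,
          ← sub_one_mul, abs_mul, abs_norm]
    _ ≤ ‖δ • w - u‖ := abs_norm_sub_norm_le _ _
    _ = ‖u - δ • w‖ := norm_sub_rev _ _

/-- In a real inner product space, if `‖u‖ = ‖w‖` then `‖u − w‖ ≤ 2‖u − δw‖`
for every real `δ ≥ 0`. -/
theorem norm_sub_le_two_mul_norm_sub_smul {H : Type*} [NormedAddCommGroup H]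
    [InnerProductSpace ℝ H] (u w : H) (h : ‖u‖ = ‖w‖) (δ : ℝ) (hδ : 0 ≤ δ) :
    ‖u - w‖ ≤ 2 * ‖u - δ • w‖ :=
  calc ‖u - w‖ ≤ ‖u - δ • w‖ + ‖δ • w - w‖ := norm_sub_le_norm_sub_add_norm_sub _ _ _
    _ ≤ 2 * ‖u - δ • w‖ := by
      linarith [norm_smul_sub_self_le_norm_sub_smul h hδ]
end

section
/- Let (d^k)_{k≥0} and (v^k)_{k≥0} be sequences in ℝⁿ and (β_k)_{k≥1} a sequence of nonnegative real numbers such that d⁰ = v⁰, d^k = v^k + β_k d^{k−1} for all k ≥ 1, and d^k ≠ 0 for all k ≥ 0. Suppose there exists γ > 0 with ‖v^k‖ ≥ γ for all k ≥ 0, and that Σ_{k≥0} ‖v^k‖⁴/‖d^k‖² < +∞. Then, with u^k := d^k/‖d^k‖, one has Σ_{k≥1} ‖u^k − u^{k−1}‖² < +∞. -/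
/-- Part (ii) of the paper's Lemma 4.1: if `d⁰ = v⁰`, `dᵏ = vᵏ + βₖ dᵏ⁻¹` with
`βₖ ≥ 0`, `dᵏ ≠ 0`, `‖vᵏ‖ ≥ γ > 0` and `Σ ‖vᵏ‖⁴/‖dᵏ‖² < ∞`, then the normalized
directions `uᵏ = dᵏ/‖dᵏ‖` satisfy `Σ ‖uᵏ − uᵏ⁻¹‖² < ∞`. -/
theorem summable_sq_norm_normalized_direction_diff {n : ℕ}
    (d v : ℕ → EuclideanSpace ℝ (Fin n)) (β : ℕ → ℝ)
    (hd0 : d 0 = v 0)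
    (hrec : ∀ k : ℕ, d (k + 1) = v (k + 1) + β (k + 1) • d k)
    (hβ : ∀ k : ℕ, 0 ≤ β (k + 1))
    (hdne : ∀ k : ℕ, d k ≠ 0)
    (γ : ℝ) (hγ : 0 < γ) (hv : ∀ k : ℕ, γ ≤ ‖v k‖)
    (hsum : Summable fun k : ℕ => ‖v k‖ ^ 4 / ‖d k‖ ^ 2) :
    Summable fun k : ℕ =>
      ‖(‖d (k + 1)‖⁻¹ • d (k + 1)) - (‖d k‖⁻¹ • d k)‖ ^ 2 := by
  have key : ∀ k : ℕ, ‖(‖d (k + 1)‖⁻¹ • d (k + 1)) - (‖d k‖⁻¹ • d k)‖ ≤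
      2 * ‖v (k + 1)‖ / ‖d (k + 1)‖ := by
    intro k
    have hdk : (0:ℝ) < ‖d k‖ := norm_pos_iff.mpr (hdne k)
    have hdk1 : (0:ℝ) < ‖d (k + 1)‖ := norm_pos_iff.mpr (hdne (k + 1))
    set u := ‖d (k + 1)‖⁻¹ • d (k + 1) with hudef
    set w := ‖d k‖⁻¹ • d k with hwdef
    set δ : ℝ := β (k + 1) * ‖d k‖ / ‖d (k + 1)‖ with hδdef
    have hδ : 0 ≤ δ := div_nonneg (mul_nonneg (hβ k) (norm_nonneg _)) (norm_nonneg _)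
    have hu : ‖u‖ = 1 := norm_smul_inv_norm (hdne (k + 1))
    have hw : ‖w‖ = 1 := norm_smul_inv_norm (hdne k)
    have hur : u - δ • w = ‖d (k + 1)‖⁻¹ • v (k + 1) := by
      rw [hudef, hwdef, hδdef, smul_smul]
      have hsc : β (k + 1) * ‖d k‖ / ‖d (k + 1)‖ * ‖d k‖⁻¹
          = ‖d (k + 1)‖⁻¹ * β (k + 1) := by
        field_simp
      rw [hsc, hrec k, smul_add, smul_smul]
      module
    have hnorm_r : ‖u - δ • w‖ = ‖v (k + 1)‖ / ‖d (k + 1)‖ := by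
      rw [hur, norm_smul, norm_inv, norm_norm]
      rw [inv_mul_eq_div]
    have hsym : ‖δ • u - w‖ = ‖u - δ • w‖ := by
      have h1 : ‖δ • u - w‖ ^ 2 = ‖u - δ • w‖ ^ 2 := by
        rw [← real_inner_self_eq_norm_sq, ← real_inner_self_eq_norm_sq]
        simp only [inner_sub_sub_self, real_inner_smul_left, real_inner_smul_right,
          real_inner_self_eq_norm_sq, hu, hw]
        rw [real_inner_comm w u]
        simp only [norm_smul, Real.norm_eq_abs, mul_pow, sq_abs]
        ring_nf
        rw [hu, hw]
      have h2 := congrArg Real.sqrt h1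
      rwa [Real.sqrt_sq (norm_nonneg _), Real.sqrt_sq (norm_nonneg _)] at h2
    have hcomb : (1 + δ) • (u - w) = (u - δ • w) + (δ • u - w) := by module
    have hbound : (1 + δ) * ‖u - w‖ ≤ 2 * (‖v (k + 1)‖ / ‖d (k + 1)‖) := by
      have : ‖(1 + δ) • (u - w)‖ ≤ ‖u - δ • w‖ + ‖δ • u - w‖ := by
        rw [hcomb]; exact norm_add_le _ _
      rw [norm_smul, Real.norm_eq_abs, abs_of_nonneg (by linarith)] at this
      rw [hsym, hnorm_r] at this
      linarith
    have h1δ : (1:ℝ) ≤ 1 + δ := by linarith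
    have hn : ‖u - w‖ ≤ (1 + δ) * ‖u - w‖ :=
      le_mul_of_one_le_left (norm_nonneg _) h1δ
    calc ‖u - w‖ ≤ 2 * (‖v (k + 1)‖ / ‖d (k + 1)‖) := le_trans hn hbound
      _ = 2 * ‖v (k + 1)‖ / ‖d (k + 1)‖ := by ring
  have hsum' : Summable fun k : ℕ =>
      (4 / γ ^ 2) * (‖v (k + 1)‖ ^ 4 / ‖d (k + 1)‖ ^ 2) :=
    (((summable_nat_add_iff 1).mpr hsum)).mul_left _
  refine hsum'.of_nonneg_of_le (fun k => by positivity) (fun k => ?_)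
  have hdk1 : (0:ℝ) < ‖d (k + 1)‖ := norm_pos_iff.mpr (hdne (k + 1))
  have hv1 : γ ≤ ‖v (k + 1)‖ := hv (k + 1)
  have h2 : ‖(‖d (k + 1)‖⁻¹ • d (k + 1)) - (‖d k‖⁻¹ • d k)‖ ^ 2 ≤
      (2 * ‖v (k + 1)‖ / ‖d (k + 1)‖) ^ 2 := by
    have := key k
    nlinarith [norm_nonneg ((‖d (k + 1)‖⁻¹ • d (k + 1)) - (‖d k‖⁻¹ • d k))]
  refine h2.trans ?_
  have hγ2 : γ ^ 2 ≤ ‖v (k + 1)‖ ^ 2 := by nlinarith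
  rw [div_pow, mul_pow]
  have hrw : 4 / γ ^ 2 * (‖v (k + 1)‖ ^ 4 / ‖d (k + 1)‖ ^ 2)
      = 4 * ‖v (k + 1)‖ ^ 4 / (γ ^ 2 * ‖d (k + 1)‖ ^ 2) := by
    field_simp
  rw [hrw, div_le_div_iff₀ (by positivity) (by positivity)]
  nlinarith [mul_le_mul_of_nonneg_left hγ2
    (show (0:ℝ) ≤ 4 * ‖v (k + 1)‖ ^ 2 * ‖d (k + 1)‖ ^ 2 by positivity)]
end

section
/- Let H be a real inner product space, (x^k)_{k≥0} a sequence in H, (t_k)_{k≥0} nonnegative real numbers, and (u^k)_{k≥0} a sequence in H with ‖u^k‖ = 1 for all k, such that x^i − x^{i−1} = t_{i−1} u^{i−1} for all i ≥ 1. Then for all integers 1 ≤ k ≤ l, Σ_{i=k}^{l} t_{i−1} ≤ ‖x^l − x^{k−1}‖ + Σ_{i=k}^{l} t_{i−1}‖u^{i−1} − u^{k−1}‖. -/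
open Finset

/- Writing `S = ∑ tᵢ`, the vector `S • v` has norm `S` and differs from `∑ tᵢ • uᵢ`
by `∑ tᵢ • (uᵢ - v)`; the triangle inequality does the rest. -/
theorem Finset.sum_le_norm_sum_smul_add_sum_mul_norm_sub {ι E : Type*}
    [SeminormedAddCommGroup E] [NormedSpace ℝ E] (s : Finset ι) {t : ι → ℝ}
    (ht : ∀ i ∈ s, 0 ≤ t i) (u : ι → E) {v : E} (hv : ‖v‖ = 1) :
    ∑ i ∈ s, t i ≤ ‖∑ i ∈ s, t i • u i‖ + ∑ i ∈ s, t i * ‖u i - v‖ := by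
  have hdecomp : (∑ i ∈ s, t i) • v = ∑ i ∈ s, t i • u i - ∑ i ∈ s, t i • (u i - v) := by
    simp only [sum_smul, smul_sub, sum_sub_distrib, sub_sub_cancel]
  calc ∑ i ∈ s, t i = ‖(∑ i ∈ s, t i) • v‖ := by
        rw [norm_smul, hv, mul_one, Real.norm_of_nonneg (sum_nonneg ht)]
    _ ≤ ‖∑ i ∈ s, t i • u i‖ + ‖∑ i ∈ s, t i • (u i - v)‖ := hdecomp ▸ norm_sub_le _ _
    _ ≤ ‖∑ i ∈ s, t i • u i‖ + ∑ i ∈ s, t i * ‖u i - v‖ := by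
        gcongr
        refine (norm_sum_le _ _).trans (sum_le_sum fun i hi => ?_)
        rw [norm_smul, Real.norm_of_nonneg (ht i hi)]

theorem sum_Ico_le_norm_sub_add_sum_mul_norm_sub {E : Type*} [SeminormedAddCommGroup E]
    [NormedSpace ℝ E] {x u : ℕ → E} {t : ℕ → ℝ} (ht : ∀ i, 0 ≤ t i)
    (hstep : ∀ i, x (i + 1) - x i = t i • u i) {m : ℕ} (hm : ‖u m‖ = 1) (n : ℕ) :
    ∑ i ∈ Ico m n, t i ≤ ‖x n - x m‖ + ∑ i ∈ Ico m n, t i * ‖u i - u m‖ := by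
  rcases le_or_gt m n with hmn | hnm
  · have htele : x n - x m = ∑ i ∈ Ico m n, t i • u i := by
      simp only [← hstep, sum_Ico_sub x hmn]
    rw [htele]
    exact sum_le_norm_sum_smul_add_sum_mul_norm_sub _ (fun i _ => ht i) u hm
  · simp [Ico_eq_empty_of_le hnm.le]

theorem Finset.sum_Icc_sub_one {M : Type*} [AddCommMonoid M] (f : ℕ → M) {k : ℕ} (hk : 1 ≤ k)
    (l : ℕ) : ∑ i ∈ Icc k l, f (i - 1) = ∑ i ∈ Ico (k - 1) l, f i := by
  obtain ⟨m, rfl⟩ := Nat.exists_eq_add_of_le' hk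
  rw [← Ico_add_one_right_eq_Icc, ← sum_Ico_add']
  simp

theorem telescoping_step_estimate_general {H : Type*} [NormedAddCommGroup H]
    [InnerProductSpace ℝ H]
    (x : ℕ → H) (t : ℕ → ℝ) (u : ℕ → H)
    (ht : ∀ k, 0 ≤ t k) (hu : ∀ k, ‖u k‖ = 1)
    (hstep : ∀ i : ℕ, x (i + 1) - x i = t i • u i)
    (k l : ℕ) (hk : 1 ≤ k) :
    ∑ i ∈ Finset.Icc k l, t (i - 1) ≤
      ‖x l - x (k - 1)‖ + ∑ i ∈ Finset.Icc k l, t (i - 1) * ‖u (i - 1) - u (k - 1)‖ := by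
  rw [sum_Icc_sub_one t hk, sum_Icc_sub_one (fun i => t i * ‖u i - u (k - 1)‖) hk]
  exact sum_Ico_le_norm_sub_add_sum_mul_norm_sub ht hstep (hu (k - 1)) l

/-- Telescoping estimate (17) in the proof of Theorem 4.1: if `xⁱ − xⁱ⁻¹ = tᵢ₋₁ uⁱ⁻¹`
with `tᵢ ≥ 0` and unit vectors `uⁱ`, then for `1 ≤ k ≤ l`,
`Σ_{i=k}^{l} t_{i−1} ≤ ‖x^l − x^{k−1}‖ + Σ_{i=k}^{l} t_{i−1} ‖u^{i−1} − u^{k−1}‖`. -/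
theorem telescoping_step_estimate {H : Type*} [NormedAddCommGroup H]
    [InnerProductSpace ℝ H]
    (x : ℕ → H) (t : ℕ → ℝ) (u : ℕ → H)
    (ht : ∀ k, 0 ≤ t k) (hu : ∀ k, ‖u k‖ = 1)
    (hstep : ∀ i : ℕ, x (i + 1) - x i = t i • u i)
    (k l : ℕ) (hk : 1 ≤ k) (hkl : k ≤ l) :
    ∑ i ∈ Finset.Icc k l, t (i - 1) ≤
      ‖x l - x (k - 1)‖ + ∑ i ∈ Finset.Icc k l, t (i - 1) * ‖u (i - 1) - u (k - 1)‖ :=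
  telescoping_step_estimate_general x t u ht hu hstep k l hk
end

section
/- Let (x^k)_{k≥0} be a sequence in a real inner product space with ‖x^k‖ ≤ M for all k, let (t_k)_{k≥0} be nonnegative reals and (u^k)_{k≥0} unit vectors with x^k − x^{k−1} = t_{k−1} u^{k−1} for all k ≥ 1, and suppose Σ_{k≥1} ‖u^k − u^{k−1}‖² < +∞. Then for every λ > 0 there exist a natural number Δ ≥ 1 and an index k₀ such that for every k ≥ k₀, the number of indices i with k ≤ i ≤ k + Δ − 1 and t_{i−1} > λ is at most Δ/2. -/
/-!
Fix `Δ ≥ 8M/λ` and go far enough out that the tail of `Σ ‖uᵏ⁺¹ − uᵏ‖²` is below `1/Δ`.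
By Cauchy–Schwarz the directions then move by at most `1` over a window of length `Δ`, so
every `uⁱ` in the window makes an angle of at most `60°` with the first one, `u^a`.
Projecting the displacement `x^{a+Δ} − x^a = Σ tᵢ uⁱ` onto `u^a` gives `½ Σ tᵢ ≤ 2M`,
so at most `4M/λ ≤ Δ/2` of the steps in the window exceed `λ`.
-/

open Finset

theorem Summable.exists_forall_sum_Ico_lt {f : ℕ → ℝ} (hf : Summable f) {ε : ℝ} (hε : 0 < ε) :
    ∃ N, ∀ a ≥ N, ∀ b, ∑ i ∈ Ico a b, f i < ε := by
  obtain ⟨s, hs⟩ := hf.vanishing (Iio_mem_nhds hε)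
  obtain ⟨N, hN⟩ := s.exists_nat_subset_range
  refine ⟨N, fun a ha b => hs _ (disjoint_of_subset_right hN ?_)⟩
  exact disjoint_left.2 fun i hi hi' => by
    simp only [mem_Ico, mem_range] at hi hi'
    omega

theorem norm_sub_sq_le_mul_sum_norm_sub_sq {E : Type*} [SeminormedAddCommGroup E] (u : ℕ → E)
    {a b : ℕ} (hab : a ≤ b) :
    ‖u b - u a‖ ^ 2 ≤ (b - a : ℕ) * ∑ i ∈ Ico a b, ‖u (i + 1) - u i‖ ^ 2 := by
  have htri : ‖u b - u a‖ ≤ ∑ i ∈ Ico a b, ‖u (i + 1) - u i‖ := by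
    rw [← sum_Ico_sub u hab]
    exact norm_sum_le _ _
  calc ‖u b - u a‖ ^ 2 ≤ (∑ i ∈ Ico a b, ‖u (i + 1) - u i‖) ^ 2 := by gcongr
    _ ≤ _ := by simpa using sq_sum_le_card_mul_sum_sq (s := Ico a b)

theorem mul_card_filter_lt_le_sum {ι R : Type*} [CommSemiring R] [PartialOrder R]
    [IsOrderedRing R] [DecidableLT R] (s : Finset ι) {g : ι → R} (hg : ∀ i ∈ s, 0 ≤ g i) (c : R) :
    c * #{i ∈ s | c < g i} ≤ ∑ i ∈ s, g i :=
  calc c * #{i ∈ s | c < g i} ≤ ∑ i ∈ s with c < g i, g i := by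
        rw [mul_comm, ← nsmul_eq_mul]
        exact card_nsmul_le_sum _ _ _ fun i hi => (mem_filter.1 hi).2.le
    _ ≤ ∑ i ∈ s, g i := sum_le_sum_of_subset_of_nonneg (filter_subset _ _) fun i hi _ => hg i hi

section InnerProductSpace

variable {H : Type*} [NormedAddCommGroup H] [InnerProductSpace ℝ H]

theorem one_half_le_inner_of_norm_sub_sq_le_one {v w : H} (hv : ‖v‖ = 1) (hw : ‖w‖ = 1)
    (h : ‖v - w‖ ^ 2 ≤ 1) : 1 / 2 ≤ inner ℝ v w := by
  rw [norm_sub_sq_real, hv, hw] at h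
  linarith

theorem mul_sum_Ico_le_norm_sub {x u : ℕ → H} {t : ℕ → ℝ} (ht : ∀ k, 0 ≤ t k)
    (hstep : ∀ k, x (k + 1) - x k = t k • u k) {a b : ℕ} (hab : a ≤ b) {e : H} (he : ‖e‖ ≤ 1)
    {c : ℝ} (hc : ∀ i ∈ Ico a b, c ≤ inner ℝ (u i) e) :
    c * ∑ i ∈ Ico a b, t i ≤ ‖x b - x a‖ :=
  calc c * ∑ i ∈ Ico a b, t i ≤ ∑ i ∈ Ico a b, t i * inner ℝ (u i) e := by
        rw [mul_sum]
        exact sum_le_sum fun i hi => by nlinarith [hc i hi, ht i]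
    _ = inner ℝ (x b - x a) e := by
        simp only [← sum_Ico_sub x hab, hstep, sum_inner, real_inner_smul_left]
    _ ≤ ‖x b - x a‖ * ‖e‖ := real_inner_le_norm _ _
    _ ≤ ‖x b - x a‖ := mul_le_of_le_one_right (norm_nonneg _) he

theorem sum_Ico_le_four_mul_of_sum_norm_sub_sq_le {x u : ℕ → H} {t : ℕ → ℝ} {M : ℝ}
    (hx : ∀ k, ‖x k‖ ≤ M) (ht : ∀ k, 0 ≤ t k) (hu : ∀ k, ‖u k‖ = 1)
    (hstep : ∀ k, x (k + 1) - x k = t k • u k) (a n : ℕ)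
    (hsmall : ∀ b, ∑ i ∈ Ico a b, ‖u (i + 1) - u i‖ ^ 2 ≤ 1 / n) :
    ∑ i ∈ Ico a (a + n), t i ≤ 4 * M := by
  have hdir : ∀ i ∈ Ico a (a + n), 1 / 2 ≤ inner ℝ (u i) (u a) := by
    intro i hi
    obtain ⟨hai, hin⟩ := mem_Ico.1 hi
    refine one_half_le_inner_of_norm_sub_sq_le_one (hu i) (hu a) ?_
    have hn : (0 : ℝ) < n := by exact_mod_cast (by omega : 0 < n)
    calc ‖u i - u a‖ ^ 2 ≤ (i - a : ℕ) * ∑ j ∈ Ico a i, ‖u (j + 1) - u j‖ ^ 2 :=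
          norm_sub_sq_le_mul_sum_norm_sub_sq u hai
      _ ≤ n * (1 / n) := by
          gcongr ?_ * ?_
          · exact_mod_cast (by omega : i - a ≤ n)
          · exact hsmall i
      _ = 1 := mul_one_div_cancel hn.ne'
  have hproj := mul_sum_Ico_le_norm_sub ht hstep (Nat.le_add_right a n) (hu a).le hdir
  have hdisp : ‖x (a + n) - x a‖ ≤ 2 * M := by
    linarith [norm_sub_le (x (a + n)) (x a), hx (a + n), hx a]
  linarith

end InnerProductSpace

/-- Analytic core of the proof of Theorem 4.1: if the iterates `xᵏ` are bounded,
`xᵏ⁺¹ − xᵏ = tₖ uᵏ` with `tₖ ≥ 0` and unit `uᵏ`, and `Σ ‖uᵏ⁺¹ − uᵏ‖² < ∞`, then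
for every `λ > 0` there are `Δ ≥ 1` and `k₀` such that every window
`[k, k+Δ−1]` with `k ≥ k₀` contains at most `Δ/2` indices `i` with `t_{i−1} > λ`. -/
theorem few_large_steps {H : Type*} [NormedAddCommGroup H] [InnerProductSpace ℝ H]
    (x : ℕ → H) (t : ℕ → ℝ) (u : ℕ → H) (M : ℝ)
    (hx : ∀ k, ‖x k‖ ≤ M) (ht : ∀ k, 0 ≤ t k) (hu : ∀ k, ‖u k‖ = 1)
    (hstep : ∀ k : ℕ, x (k + 1) - x k = t k • u k)
    (hsum : Summable fun k : ℕ => ‖u (k + 1) - u k‖ ^ 2) :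
    ∀ lam : ℝ, 0 < lam → ∃ Δ : ℕ, 1 ≤ Δ ∧ ∃ k₀ : ℕ, ∀ k ≥ k₀,
      ((((Finset.Icc k (k + Δ - 1)).filter fun i => lam < t (i - 1)).card : ℝ)
        ≤ (Δ : ℝ) / 2) := by
  intro lam hlam
  set Δ := ⌈8 * M / lam⌉₊ + 1
  have hΔ : 8 * M ≤ Δ * lam := by
    rw [← div_le_iff₀ hlam]
    exact (Nat.le_ceil _).trans (by simp [Δ])
  obtain ⟨N, hN⟩ := hsum.exists_forall_sum_Ico_lt (ε := 1 / Δ) (by positivity)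
  refine ⟨Δ, Nat.le_add_left _ _, N + 1, fun k hk => ?_⟩
  obtain ⟨a, rfl⟩ : ∃ a, k = a + 1 := ⟨k - 1, by omega⟩
  have hshift : ∑ i ∈ Icc (a + 1) (a + 1 + Δ - 1), t (i - 1) = ∑ i ∈ Ico a (a + Δ), t i := by
    rw [show a + 1 + Δ - 1 = a + Δ by omega, ← Ico_add_one_right_eq_Icc, ← sum_Ico_add']
    simp
  have hcount := mul_card_filter_lt_le_sum (Icc (a + 1) (a + 1 + Δ - 1))
    (fun i _ => ht (i - 1)) lam
  have hwindow := sum_Ico_le_four_mul_of_sum_norm_sub_sq_le hx ht hu hstep a Δ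
    fun b => (hN a (by omega) b).le
  rw [hshift] at hcount
  rw [le_div_iff₀ two_pos]
  refine le_of_mul_le_mul_left ?_ hlam
  linarith
end

section
/- Let (d^k)_{k≥0}, (v^k)_{k≥0} be sequences in ℝⁿ and (β_k)_{k≥1}, (t_k)_{k≥0} sequences of real numbers with t_k ≥ 0, such that d⁰ = v⁰, d^k = v^k + β_k d^{k−1} for all k ≥ 1, and d^k ≠ 0 for all k. Set s^k := t_k d^k. Suppose: (a) there exist constants 0 < γ ≤ γ̄ with γ ≤ ‖v^k‖ ≤ γ̄ for all k ≥ 0; (b) Σ_{k≥0} ‖v^k‖⁴/‖d^k‖² < +∞; and (c) there exist constants b > 1 and λ > 0 such that |β_k| ≤ b for all k, and ‖s^{k−1}‖ ≤ λ implies |β_k| ≤ 1/(2b). Then for every natural number Δ ≥ 1 and every index k₀ there exists k ≥ k₀ such that the number of indices i with k ≤ i ≤ k + Δ − 1 and ‖s^{i−1}‖ > λ is strictly greater than Δ/2. -/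
/-!
Suppose that beyond some `k₀` every window of length `Δ` contains at most `Δ/2` large steps.
Squaring the recurrence gives `‖dᵏ⁺¹‖² ≤ 2γ̄² + 2β²ₖ₊₁ ‖dᵏ‖²`. In every window at least half of the
factors `2βᵢ²` come from small steps and are at most `1/(2b²)` by Property (*), which compensates
the remaining factors `2βᵢ² ≤ 2b²`; hence every product of consecutive factors in the tail is at
most `(2b²)^Δ`. Unrolling the recurrence, `‖dᵏ‖²` grows at most linearly, so `Σ 1/‖dᵏ‖²` diverges
like the harmonic series, while `‖vᵏ‖ ≥ γ` and the Zoutendijk condition make it converge.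
-/

open Finset

lemma norm_add_smul_sq_le {E : Type*} [SeminormedAddCommGroup E] [NormedSpace ℝ E]
    (x y : E) (c : ℝ) : ‖x + c • y‖ ^ 2 ≤ 2 * ‖x‖ ^ 2 + 2 * c ^ 2 * ‖y‖ ^ 2 :=
  calc ‖x + c • y‖ ^ 2 ≤ (‖x‖ + |c| * ‖y‖) ^ 2 := by
        gcongr
        simpa [norm_smul] using norm_add_le x (c • y)
    _ ≤ 2 * (‖x‖ ^ 2 + (|c| * ‖y‖) ^ 2) := add_sq_le
    _ = 2 * ‖x‖ ^ 2 + 2 * c ^ 2 * ‖y‖ ^ 2 := by rw [mul_pow, sq_abs]; ring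

lemma Summable.of_mul_of_lower_bound {ι : Type*} {u w : ι → ℝ} {c : ℝ} (hc : 0 < c)
    (hcu : ∀ k, c ≤ u k) (hw : ∀ k, 0 ≤ w k) (hs : Summable fun k => u k * w k) :
    Summable w :=
  (hs.mul_left c⁻¹).of_nonneg_of_le hw fun k => by
    rw [le_inv_mul_iff₀ hc]
    exact mul_le_mul_of_nonneg_right (hcu k) (hw k)

lemma not_summable_inv_of_le_mul_succ {x : ℕ → ℝ} {C : ℝ} (K : ℕ) (hx : ∀ k, 0 < x k)
    (hle : ∀ m : ℕ, x (K + m) ≤ C * (m + 1)) : ¬Summable fun k => (x k)⁻¹ := by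
  intro hs
  have hC : 0 < C := by simpa using (hx K).trans_le (hle 0)
  have hharmonic : Summable fun m : ℕ => ((m + 1 : ℕ) : ℝ)⁻¹ := by
    refine (((summable_nat_add_iff K).2 hs).mul_left C).of_nonneg_of_le
      (fun m => by positivity) fun m => ?_
    rw [← div_eq_mul_inv, le_div_iff₀ (hx _), ← div_eq_inv_mul, div_le_iff₀ (by positivity),
      add_comm m, Nat.cast_succ]
    exact hle m
  exact Real.not_summable_natCast_inv ((summable_nat_add_iff 1).1 hharmonic)

lemma prod_le_one_of_two_mul_card_filter_le {ι : Type*} {s : Finset ι} {p : ι → Prop}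
    [DecidablePred p] {B : ι → ℝ} {L : ℝ} (hL : 1 ≤ L) (hB : ∀ i ∈ s, 0 ≤ B i)
    (hBp : ∀ i ∈ s, p i → B i ≤ L) (hBnp : ∀ i ∈ s, ¬p i → B i ≤ L⁻¹)
    (hcard : 2 * #(s.filter p) ≤ #s) : ∏ i ∈ s, B i ≤ 1 := by
  have hle : #(s.filter p) ≤ #(s.filter (¬p ·)) := by
    have := card_filter_add_card_filter_not (s := s) p
    omega
  rw [← prod_filter_mul_prod_filter_not s p]
  calc (∏ i ∈ s.filter p, B i) * ∏ i ∈ s.filter (¬p ·), B i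
      ≤ (∏ _i ∈ s.filter p, L) * ∏ _i ∈ s.filter (¬p ·), L⁻¹ := by
        refine mul_le_mul (prod_le_prod ?_ ?_) (prod_le_prod ?_ ?_) (prod_nonneg ?_)
          (prod_nonneg fun _ _ => by positivity) <;> simp only [mem_filter] <;> grind
    _ ≤ 1 := by
        rw [prod_const, prod_const, inv_pow, ← div_eq_mul_inv, div_le_one (by positivity)]
        exact pow_le_pow_right₀ hL hle

lemma prod_Ioc_le_pow_of_prod_window_le_one {B : ℕ → ℝ} {L : ℝ} {K Δ : ℕ} (hΔ : 0 < Δ)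
    (hL : 1 ≤ L) (hB : ∀ i, 0 ≤ B i) (hBL : ∀ i, K < i → B i ≤ L)
    (hwin : ∀ p, K ≤ p → ∏ i ∈ Ioc p (p + Δ), B i ≤ 1) (p q : ℕ) (hp : K ≤ p) :
    ∏ i ∈ Ioc p q, B i ≤ L ^ Δ := by
  induction h : q - p using Nat.strong_induction_on generalizing p with
  | _ N ih =>
  by_cases hq : q ≤ p + Δ
  · calc ∏ i ∈ Ioc p q, B i ≤ ∏ _i ∈ Ioc p q, L :=
          prod_le_prod (fun i _ => hB i) fun i hi => hBL i (by grind)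
      _ ≤ L ^ Δ := by
          rw [prod_const, Nat.card_Ioc]
          exact pow_le_pow_right₀ hL (by omega)
  · rw [← prod_Ioc_consecutive B (p.le_add_right Δ) (by omega)]
    calc (∏ i ∈ Ioc p (p + Δ), B i) * ∏ i ∈ Ioc (p + Δ) q, B i ≤ 1 * L ^ Δ :=
          mul_le_mul (hwin p hp) (ih _ (by omega) (p + Δ) (by omega) rfl)
            (prod_nonneg fun i _ => hB i) zero_le_one
      _ = L ^ Δ := one_mul _

lemma le_prod_mul_add_sum_prod_of_le_add_mul {D B : ℕ → ℝ} {A : ℝ} (hB : ∀ i, 0 ≤ B i)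
    (hstep : ∀ k, D (k + 1) ≤ A + B (k + 1) * D k) {p q : ℕ} (hpq : p ≤ q) :
    D q ≤ (∏ i ∈ Ioc p q, B i) * D p + A * ∑ j ∈ Ioc p q, ∏ i ∈ Ioc j q, B i := by
  induction q, hpq using Nat.le_induction with
  | base => simp
  | succ q hpq ih =>
    rw [prod_Ioc_succ_top hpq, sum_Ioc_succ_top hpq, Ioc_self, prod_empty,
      sum_congr rfl fun j hj => prod_Ioc_succ_top (mem_Ioc.1 hj).2 B, ← sum_mul]
    linarith [mul_le_mul_of_nonneg_left ih (hB (q + 1)), hstep q]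

lemma exists_le_mul_succ_of_le_add_mul {D B : ℕ → ℝ} {A M : ℝ} {K : ℕ} (hA : 0 ≤ A)
    (hD : 0 ≤ D K) (hB : ∀ i, 0 ≤ B i) (hstep : ∀ k, D (k + 1) ≤ A + B (k + 1) * D k)
    (hM : ∀ p q, K ≤ p → ∏ i ∈ Ioc p q, B i ≤ M) :
    ∃ C, ∀ m : ℕ, D (K + m) ≤ C * (m + 1) := by
  have hM1 : 1 ≤ M := by simpa using hM K K le_rfl
  refine ⟨M * D K + A * M, fun m => ?_⟩
  have hsum : ∑ j ∈ Ioc K (K + m), ∏ i ∈ Ioc j (K + m), B i ≤ m * M :=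
    calc _ ≤ ∑ _j ∈ Ioc K (K + m), M :=
          sum_le_sum fun j hj => hM j _ (mem_Ioc.1 hj).1.le
      _ = m * M := by simp
  calc D (K + m) ≤ (∏ i ∈ Ioc K (K + m), B i) * D K
          + A * ∑ j ∈ Ioc K (K + m), ∏ i ∈ Ioc j (K + m), B i :=
        le_prod_mul_add_sum_prod_of_le_add_mul hB hstep (K.le_add_right m)
    _ ≤ M * D K + A * (m * M) := by gcongr; exact hM _ _ le_rfl
    _ ≤ (M * D K + A * M) * (m + 1) := by
        have : 0 ≤ M * D K * m := by positivity
        nlinarith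

lemma two_mul_sq_le_inv_of_abs_le_one_div {x b : ℝ} (hb : 0 < b) (hx : |x| ≤ 1 / (2 * b)) :
    2 * x ^ 2 ≤ (2 * b ^ 2)⁻¹ :=
  calc 2 * x ^ 2 = 2 * |x| ^ 2 := by rw [sq_abs]
    _ ≤ 2 * (1 / (2 * b)) ^ 2 := by gcongr
    _ = (2 * b ^ 2)⁻¹ := by field_simp

theorem many_large_steps_of_property_star_general {n : ℕ}
    (d v : ℕ → EuclideanSpace ℝ (Fin n)) (β t : ℕ → ℝ)
    (hrec : ∀ k : ℕ, d (k + 1) = v (k + 1) + β (k + 1) • d k)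
    (hdne : ∀ k : ℕ, d k ≠ 0)
    (γ γbar : ℝ) (hγ : 0 < γ)
    (hvlow : ∀ k : ℕ, γ ≤ ‖v k‖) (hvhigh : ∀ k : ℕ, ‖v k‖ ≤ γbar)
    (hsum : Summable fun k : ℕ => ‖v k‖ ^ 4 / ‖d k‖ ^ 2)
    (b lam : ℝ) (hb : 1 < b)
    (hβb : ∀ k : ℕ, |β (k + 1)| ≤ b)
    (hprop : ∀ k : ℕ, ‖t k • d k‖ ≤ lam → |β (k + 1)| ≤ 1 / (2 * b)) :
    ∀ Δ : ℕ, 1 ≤ Δ → ∀ k₀ : ℕ, ∃ k ≥ k₀,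
      (Δ : ℝ) / 2 <
        (((Finset.Icc k (k + Δ - 1)).filter
            fun i => lam < ‖t (i - 1) • d (i - 1)‖).card : ℝ) := by
  intro Δ hΔ k₀
  by_contra! hfew
  set B : ℕ → ℝ := fun i => 2 * β i ^ 2
  have hL : 1 ≤ 2 * b ^ 2 := by nlinarith
  have hB : ∀ i, 0 ≤ B i := fun i => by positivity
  have hBbound : ∀ i, 0 < i → B i ≤ 2 * b ^ 2 ∧
      (‖t (i - 1) • d (i - 1)‖ ≤ lam → B i ≤ (2 * b ^ 2)⁻¹) := by
    rintro (_ | k) hk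
    · omega
    refine ⟨?_, fun hs => two_mul_sq_le_inv_of_abs_le_one_div (by linarith) (hprop k hs)⟩
    have := pow_le_pow_left₀ (abs_nonneg _) (hβb k) 2
    rw [sq_abs] at this
    linarith
  have hwin : ∀ p, k₀ ≤ p → ∏ i ∈ Ioc p (p + Δ), B i ≤ 1 := by
    intro p hp
    have hcount := hfew (p + 1) (by omega)
    rw [show p + 1 + Δ - 1 = p + Δ by omega, Icc_add_one_left_eq_Ioc] at hcount
    refine prod_le_one_of_two_mul_card_filter_le hL (fun i _ => hB i)
      (fun i hi _ => (hBbound i (by grind)).1)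
      (fun i hi h => (hBbound i (by grind)).2 (not_lt.1 h)) ?_
    rw [Nat.card_Ioc, add_tsub_cancel_left]
    exact_mod_cast (le_div_iff₀' two_pos).1 hcount
  have hstep : ∀ k, ‖d (k + 1)‖ ^ 2 ≤ 2 * γbar ^ 2 + B (k + 1) * ‖d k‖ ^ 2 := fun k => by
    rw [hrec k]
    refine (norm_add_smul_sq_le _ _ _).trans ?_
    gcongr
    exact hvhigh _
  obtain ⟨C, hC⟩ := exists_le_mul_succ_of_le_add_mul (D := fun k => ‖d k‖ ^ 2)
    (by positivity) (by positivity) hB hstep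
    (prod_Ioc_le_pow_of_prod_window_le_one hΔ hL hB (fun i hi => (hBbound i (by omega)).1) hwin)
  refine not_summable_inv_of_le_mul_succ k₀ (fun k => pow_pos (norm_pos_iff.2 (hdne k)) 2) hC ?_
  exact Summable.of_mul_of_lower_bound (pow_pos hγ 4)
    (fun k => pow_le_pow_left₀ hγ.le (hvlow k) 4) (fun k => by positivity)
    (by simpa only [div_eq_mul_inv] using hsum)

/-- The paper's Lemma 4.2 in abstract sequence form: under the conjugate-direction
recurrence, the bounds `γ ≤ ‖vᵏ‖ ≤ γ̄`, the Zoutendijk-type condition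
`Σ ‖vᵏ‖⁴/‖dᵏ‖² < ∞`, and Property (*), every tail contains a window
`[k, k+Δ−1]` in which strictly more than `Δ/2` steps `sⁱ⁻¹ = t_{i−1} dⁱ⁻¹`
satisfy `‖sⁱ⁻¹‖ > λ`. -/
theorem many_large_steps_of_property_star {n : ℕ}
    (d v : ℕ → EuclideanSpace ℝ (Fin n)) (β t : ℕ → ℝ)
    (ht : ∀ k, 0 ≤ t k)
    (hd0 : d 0 = v 0)
    (hrec : ∀ k : ℕ, d (k + 1) = v (k + 1) + β (k + 1) • d k)
    (hdne : ∀ k : ℕ, d k ≠ 0)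
    (γ γbar : ℝ) (hγ : 0 < γ) (hγγ : γ ≤ γbar)
    (hvlow : ∀ k : ℕ, γ ≤ ‖v k‖) (hvhigh : ∀ k : ℕ, ‖v k‖ ≤ γbar)
    (hsum : Summable fun k : ℕ => ‖v k‖ ^ 4 / ‖d k‖ ^ 2)
    (b lam : ℝ) (hb : 1 < b) (hlam : 0 < lam)
    (hβb : ∀ k : ℕ, |β (k + 1)| ≤ b)
    (hprop : ∀ k : ℕ, ‖t k • d k‖ ≤ lam → |β (k + 1)| ≤ 1 / (2 * b)) :
    ∀ Δ : ℕ, 1 ≤ Δ → ∀ k₀ : ℕ, ∃ k ≥ k₀,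
      (Δ : ℝ) / 2 <
        (((Finset.Icc k (k + Δ - 1)).filter
            fun i => lam < ‖t (i - 1) • d (i - 1)‖).card : ℝ) :=
  many_large_steps_of_property_star_general d v β t hrec hdne γ γbar hγ hvlow hvhigh hsum b lam hb
    hβb hprop
end

section
/- Let (x^k)_{k≥0}, (d^k)_{k≥0}, (v^k)_{k≥0} be sequences in ℝⁿ and (β_k)_{k≥1}, (t_k)_{k≥0} sequences of real numbers such that: d⁰ = v⁰; d^k = v^k + β_k d^{k−1} with β_k ≥ 0 for all k ≥ 1; d^k ≠ 0 for all k; x^{k+1} = x^k + t_k d^k with t_k ≥ 0 for all k; ‖x^k‖ ≤ M and ‖v^k‖ ≤ γ̄ for all k and some constants M, γ̄ > 0; Σ_{k≥0} ‖v^k‖⁴/‖d^k‖² < +∞; and there exist constants b > 1 and λ > 0 such that β_k ≤ b for all k and ‖x^k − x^{k−1}‖ ≤ λ implies β_k ≤ 1/(2b). Then liminf_{k→∞} ‖v^k‖ = 0. -/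
set_option maxHeartbeats 2000000

open Filter Finset

lemma aux_norm_symm {E : Type*} [NormedAddCommGroup E] [InnerProductSpace ℝ E]
    (u w : E) (δ : ℝ) (hu : ‖u‖ = 1) (hw : ‖w‖ = 1) :
    ‖w - δ • u‖ = ‖u - δ • w‖ := by
  have h1 : ‖w - δ • u‖ ^ 2 = ‖u - δ • w‖ ^ 2 := by
    rw [norm_sub_sq_real, norm_sub_sq_real, norm_smul, norm_smul, hu, hw,
      real_inner_smul_right, real_inner_smul_right, real_inner_comm]
  have := congrArg Real.sqrt h1
  rwa [Real.sqrt_sq (norm_nonneg _), Real.sqrt_sq (norm_nonneg _)] at this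

lemma aux_dir {E : Type*} [NormedAddCommGroup E] [InnerProductSpace ℝ E]
    (u w : E) (δ : ℝ) (hu : ‖u‖ = 1) (hw : ‖w‖ = 1) (hδ : 0 ≤ δ) :
    ‖u - w‖ ≤ 2 * ‖u - δ • w‖ := by
  have h2 : (1 + δ) • (u - w) = (u - δ • w) - (w - δ • u) := by
    simp [smul_sub, add_smul, one_smul]; abel
  have h3 : (1 + δ) * ‖u - w‖ ≤ 2 * ‖u - δ • w‖ := by
    calc (1 + δ) * ‖u - w‖ = ‖(1 + δ) • (u - w)‖ := by
          rw [norm_smul, Real.norm_eq_abs, abs_of_nonneg (by linarith)]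
      _ = ‖(u - δ • w) - (w - δ • u)‖ := by rw [h2]
      _ ≤ ‖u - δ • w‖ + ‖w - δ • u‖ := norm_sub_le _ _
      _ = 2 * ‖u - δ • w‖ := by rw [aux_norm_symm u w δ hu hw]; ring
  nlinarith [norm_nonneg (u - w), norm_nonneg (u - δ • w)]

/-- The paper's Theorem 4.1 in abstract sequence form: under the conjugate-direction
recurrence with `βₖ ≥ 0`, bounded iterates `‖xᵏ‖ ≤ M`, bounded `‖vᵏ‖ ≤ γ̄`, the
Zoutendijk-type condition `Σ ‖vᵏ‖⁴/‖dᵏ‖² < ∞`, and Property (*), one has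
`liminf ‖vᵏ‖ = 0`. -/
theorem liminf_norm_v_eq_zero {n : ℕ}
    (x d v : ℕ → EuclideanSpace ℝ (Fin n)) (β t : ℕ → ℝ)
    (hd0 : d 0 = v 0)
    (hrec : ∀ k : ℕ, d (k + 1) = v (k + 1) + β (k + 1) • d k)
    (hβnn : ∀ k : ℕ, 0 ≤ β (k + 1))
    (hdne : ∀ k : ℕ, d k ≠ 0)
    (hstep : ∀ k : ℕ, x (k + 1) = x k + t k • d k)
    (ht : ∀ k, 0 ≤ t k)
    (M γbar : ℝ) (hM : 0 < M) (hγbar : 0 < γbar)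
    (hx : ∀ k : ℕ, ‖x k‖ ≤ M) (hv : ∀ k : ℕ, ‖v k‖ ≤ γbar)
    (hsum : Summable fun k : ℕ => ‖v k‖ ^ 4 / ‖d k‖ ^ 2)
    (b lam : ℝ) (hb : 1 < b) (hlam : 0 < lam)
    (hβb : ∀ k : ℕ, β (k + 1) ≤ b)
    (hprop : ∀ k : ℕ, ‖x (k + 1) - x k‖ ≤ lam → β (k + 1) ≤ 1 / (2 * b)) :
    Filter.atTop.liminf (fun k : ℕ => ‖v k‖) = 0 := by
  classical
  by_contra hne
  -- Step A: get ε > 0 and K : ∀ k ≥ K, ε < ‖v k‖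
  have hba : IsBoundedUnder (· ≤ ·) atTop (fun k => ‖v k‖) :=
    isBoundedUnder_of ⟨γbar, fun k => hv k⟩
  have hbb : IsBoundedUnder (· ≥ ·) atTop (fun k => ‖v k‖) :=
    isBoundedUnder_of ⟨0, fun k => norm_nonneg _⟩
  have h0 : 0 ≤ atTop.liminf (fun k => ‖v k‖) :=
    le_liminf_of_le hba.isCoboundedUnder_ge (by filter_upwards with k using norm_nonneg _)
  have hLpos : 0 < atTop.liminf (fun k => ‖v k‖) := lt_of_le_of_ne h0 (Ne.symm hne)
  set ε : ℝ := atTop.liminf (fun k => ‖v k‖) / 2 with hεdef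
  have hε : 0 < ε := by positivity
  have hev : ∀ᶠ k in atTop, ε < ‖v k‖ :=
    eventually_lt_of_lt_liminf (by rw [hεdef]; linarith) hbb
  obtain ⟨K, hK⟩ := eventually_atTop.1 hev
  -- basic facts
  have hd_pos : ∀ k, 0 < ‖d k‖ := fun k => norm_pos_iff.mpr (hdne k)
  set u : ℕ → EuclideanSpace ℝ (Fin n) := fun k => ‖d k‖⁻¹ • d k with hu_def
  have hu1 : ∀ k, ‖u k‖ = 1 := fun k => norm_smul_inv_norm (hdne k)
  -- direction-change estimate
  have hustep : ∀ k : ℕ, ‖u (k + 1) - u k‖ ≤ 2 * (‖v (k + 1)‖ / ‖d (k + 1)‖) := by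
    intro k
    set δ : ℝ := β (k + 1) * ‖d k‖ / ‖d (k + 1)‖ with hδdef
    have hδ : 0 ≤ δ := by
      apply div_nonneg (mul_nonneg (hβnn k) (norm_nonneg _)) (norm_nonneg _)
    have hdk := (hd_pos k).ne'
    have hdk1 := (hd_pos (k + 1)).ne'
    have hkey : u (k + 1) - δ • u k = ‖d (k + 1)‖⁻¹ • v (k + 1) := by
      have e1 : u (k + 1) = ‖d (k + 1)‖⁻¹ • v (k + 1) + (‖d (k + 1)‖⁻¹ * β (k + 1)) • d k := by
        simp only [hu_def]
        nth_rewrite 2 [hrec k]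
        rw [smul_add, smul_smul]
      have e2 : δ • u k = (‖d (k + 1)‖⁻¹ * β (k + 1)) • d k := by
        simp only [hu_def]
        rw [smul_smul, hδdef]
        congr 1
        field_simp
      rw [e1, e2, add_sub_cancel_right]
    have h1 := aux_dir (u (k + 1)) (u k) δ (hu1 _) (hu1 _) hδ
    rw [hkey] at h1
    calc ‖u (k + 1) - u k‖ ≤ 2 * ‖‖d (k + 1)‖⁻¹ • v (k + 1)‖ := h1
      _ = 2 * (‖v (k + 1)‖ / ‖d (k + 1)‖) := by
          rw [norm_smul, norm_inv, norm_norm, div_eq_inv_mul]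
  -- step representation
  have hs : ∀ i, x (i + 1) - x i = t i • d i := fun i => by
    rw [hstep i, add_sub_cancel_left]
  have hsu : ∀ i, x (i + 1) - x i = ‖x (i + 1) - x i‖ • u i := by
    intro i
    rw [hs i, norm_smul, Real.norm_eq_abs, abs_of_nonneg (ht i)]
    simp only [hu_def]
    rw [smul_smul, mul_assoc, mul_inv_cancel₀ (hd_pos i).ne', mul_one]
  -- the window length
  set Δ : ℕ := ⌊8 * M / lam⌋₊ + 1 with hΔdef
  have hΔpos : 0 < Δ := Nat.succ_pos _
  have hΔR : (0 : ℝ) < (Δ : ℕ) := by exact_mod_cast hΔpos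
  have hΔgt : 8 * M / lam < (Δ : ℝ) := by
    rw [hΔdef]; push_cast; exact Nat.lt_floor_add_one _
  -- tail control on direction changes
  have htend0 : Tendsto (fun k => ‖v k‖ ^ 4 / ‖d k‖ ^ 2) atTop (nhds 0) :=
    hsum.tendsto_atTop_zero
  have hthr : (0 : ℝ) < ε ^ 2 / (16 * (Δ : ℝ) ^ 2) := by positivity
  obtain ⟨N₁, hN₁⟩ := eventually_atTop.1 (htend0.eventually_lt_const hthr)
  set k₀ : ℕ := K + N₁ with hk₀def
  -- consecutive direction changes are small beyond k₀
  have hsmall : ∀ j, k₀ ≤ j → ‖u (j + 1) - u j‖ ≤ 1 / (2 * (Δ : ℝ)) := by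
    intro j hj
    have hVε : ε < ‖v (j + 1)‖ := hK (j + 1) (by omega)
    have hterm : ‖v (j + 1)‖ ^ 4 / ‖d (j + 1)‖ ^ 2 < ε ^ 2 / (16 * (Δ : ℝ) ^ 2) :=
      hN₁ (j + 1) (by omega)
    have hD := hd_pos (j + 1)
    set V := ‖v (j + 1)‖
    set Dn := ‖d (j + 1)‖
    have hVpos : 0 < V := lt_trans hε hVε
    have hq : V ^ 4 / Dn ^ 2 = V ^ 2 * (V / Dn) ^ 2 := by
      field_simp
    have h2 : ε ^ 2 * (V / Dn) ^ 2 ≤ V ^ 2 * (V / Dn) ^ 2 := by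
      have : ε ^ 2 ≤ V ^ 2 := by nlinarith
      nlinarith [sq_nonneg (V / Dn)]
    have h3 : (V / Dn) ^ 2 < 1 / (16 * (Δ : ℝ) ^ 2) := by
      rw [hq] at hterm
      have h5 : ε ^ 2 * (V / Dn) ^ 2 < ε ^ 2 * (1 / (16 * (Δ : ℝ) ^ 2)) := by
        calc ε ^ 2 * (V / Dn) ^ 2 ≤ V ^ 2 * (V / Dn) ^ 2 := h2
          _ < ε ^ 2 / (16 * (Δ : ℝ) ^ 2) := hterm
          _ = ε ^ 2 * (1 / (16 * (Δ : ℝ) ^ 2)) := by ring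
      exact lt_of_mul_lt_mul_left h5 (by positivity)
    have h4 : V / Dn ≤ 1 / (4 * (Δ : ℝ)) := by
      have ha : 0 ≤ V / Dn := by positivity
      have hbp : (0 : ℝ) < 1 / (4 * (Δ : ℝ)) := by positivity
      have hsq : (1 / (4 * (Δ : ℝ))) ^ 2 = 1 / (16 * (Δ : ℝ) ^ 2) := by
        rw [div_pow, one_pow, mul_pow]; norm_num
      have h3' : (V / Dn) ^ 2 ≤ (1 / (4 * (Δ : ℝ))) ^ 2 := by rw [hsq]; exact h3.le
      nlinarith [h3', ha, hbp.le, sq_nonneg (V / Dn + 1 / (4 * (Δ : ℝ)))]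
    calc ‖u (j + 1) - u j‖ ≤ 2 * (V / Dn) := hustep j
      _ ≤ 2 * (1 / (4 * (Δ : ℝ))) := by linarith
      _ = 1 / (2 * (Δ : ℝ)) := by field_simp; ring
  -- accumulated direction change within a window is ≤ 1/2
  have hui : ∀ k, k₀ ≤ k → ∀ m : ℕ, m ≤ Δ → ‖u (k + m) - u k‖ ≤ 1 / 2 := by
    intro k hk m hm
    have haux : ∀ m : ℕ, ‖u (k + m) - u k‖ ≤ (m : ℝ) * (1 / (2 * (Δ : ℝ))) := by
      intro m
      induction m with
      | zero => simp
      | succ p ih =>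
        have h1 : ‖u (k + (p + 1)) - u k‖ ≤
            ‖u (k + p + 1) - u (k + p)‖ + ‖u (k + p) - u k‖ := by
          have : u (k + (p + 1)) - u k = (u (k + p + 1) - u (k + p)) + (u (k + p) - u k) := by
            show u ((k + p) + 1) - u k = _
            abel
          rw [this]; exact norm_add_le _ _
        have h2 := hsmall (k + p) (by omega)
        rw [Nat.cast_succ]
        linarith
    calc ‖u (k + m) - u k‖ ≤ (m : ℝ) * (1 / (2 * (Δ : ℝ))) := haux m
      _ ≤ (Δ : ℝ) * (1 / (2 * (Δ : ℝ))) := by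
          apply mul_le_mul_of_nonneg_right (by exact_mod_cast hm) (by positivity)
      _ = 1 / 2 := by field_simp
  -- window displacement bound
  have hwindowS : ∀ k, k₀ ≤ k → ∑ i ∈ Finset.Ico k (k + Δ), ‖x (i + 1) - x i‖ ≤ 4 * M := by
    intro k hk
    set S := ∑ i ∈ Finset.Ico k (k + Δ), ‖x (i + 1) - x i‖ with hSdef
    have hSnn : 0 ≤ S := Finset.sum_nonneg fun i _ => norm_nonneg _
    have htel : ∑ i ∈ Finset.Ico k (k + Δ), (x (i + 1) - x i) = x (k + Δ) - x k := by
      rw [Finset.sum_Ico_eq_sub _ (Nat.le_add_right k Δ),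
        Finset.sum_range_sub (fun i => x i), Finset.sum_range_sub (fun i => x i)]
      abel
    have hub : ∀ i ∈ Finset.Ico k (k + Δ), ‖u i - u k‖ ≤ 1 / 2 := by
      intro i hi
      rw [Finset.mem_Ico] at hi
      obtain ⟨m, rfl⟩ := Nat.exists_eq_add_of_le hi.1
      exact hui k hk m (by omega)
    have hdecomp : x (k + Δ) - x k =
        (∑ i ∈ Finset.Ico k (k + Δ), ‖x (i + 1) - x i‖ • (u i - u k)) + S • u k := by
      calc x (k + Δ) - x k = ∑ i ∈ Finset.Ico k (k + Δ), (x (i + 1) - x i) := htel.symm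
        _ = ∑ i ∈ Finset.Ico k (k + Δ), (‖x (i + 1) - x i‖ • (u i - u k)
              + ‖x (i + 1) - x i‖ • u k) := by
            refine Finset.sum_congr rfl fun i _ => ?_
            rw [← smul_add, sub_add_cancel]
            exact hsu i
        _ = _ := by rw [Finset.sum_add_distrib, ← Finset.sum_smul]
    have hnormsum : ‖∑ i ∈ Finset.Ico k (k + Δ), ‖x (i + 1) - x i‖ • (u i - u k)‖ ≤ S / 2 := by
      calc ‖∑ i ∈ Finset.Ico k (k + Δ), ‖x (i + 1) - x i‖ • (u i - u k)‖
          ≤ ∑ i ∈ Finset.Ico k (k + Δ), ‖‖x (i + 1) - x i‖ • (u i - u k)‖ :=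
            norm_sum_le _ _
        _ ≤ ∑ i ∈ Finset.Ico k (k + Δ), ‖x (i + 1) - x i‖ * (1 / 2) := by
            refine Finset.sum_le_sum fun i hi => ?_
            rw [norm_smul, Real.norm_eq_abs, abs_of_nonneg (norm_nonneg _)]
            exact mul_le_mul_of_nonneg_left (hub i hi) (norm_nonneg _)
        _ = S / 2 := by rw [← Finset.sum_mul]; ring
    have hSnorm : S = ‖S • u k‖ := by
      rw [norm_smul, hu1 k, Real.norm_eq_abs, abs_of_nonneg hSnn, mul_one]
    have hxx : ‖x (k + Δ) - x k‖ ≤ 2 * M := by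
      calc ‖x (k + Δ) - x k‖ ≤ ‖x (k + Δ)‖ + ‖x k‖ := norm_sub_le _ _
        _ ≤ 2 * M := by linarith [hx (k + Δ), hx k]
    have : S ≤ 2 * M + S / 2 := by
      calc S = ‖S • u k‖ := hSnorm
        _ = ‖(x (k + Δ) - x k) - ∑ i ∈ Finset.Ico k (k + Δ), ‖x (i + 1) - x i‖ • (u i - u k)‖ := by
            rw [hdecomp]; congr 1; abel
        _ ≤ ‖x (k + Δ) - x k‖ + ‖∑ i ∈ Finset.Ico k (k + Δ), ‖x (i + 1) - x i‖ • (u i - u k)‖ :=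
            norm_sub_le _ _
        _ ≤ 2 * M + S / 2 := add_le_add hxx hnormsum
    linarith
  -- product bound over a window
  have h2b2 : (1 : ℝ) ≤ 2 * b ^ 2 := by nlinarith
  have hprod : ∀ k, k₀ ≤ k → (∏ i ∈ Finset.Ico k (k + Δ), (2 * β (i + 1) ^ 2)) ≤ 1 := by
    intro k hk
    set W := Finset.Ico k (k + Δ) with hWdef
    set p : ℕ → Prop := fun i => lam < ‖x (i + 1) - x i‖ with hpdef
    have hsplit := Finset.prod_filter_mul_prod_filter_not W p (fun i => 2 * β (i + 1) ^ 2)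
    -- cardinality of large-step indices
    have hcard1 : ((W.filter p).card : ℝ) * lam ≤ 4 * M := by
      have h1 : (W.filter p).card • lam ≤ ∑ i ∈ W.filter p, ‖x (i + 1) - x i‖ :=
        Finset.card_nsmul_le_sum _ _ _ fun i hi => le_of_lt (Finset.mem_filter.1 hi).2
      have h2 : ∑ i ∈ W.filter p, ‖x (i + 1) - x i‖ ≤ ∑ i ∈ W, ‖x (i + 1) - x i‖ :=
        Finset.sum_le_sum_of_subset_of_nonneg (Finset.filter_subset _ _)
          (fun i _ _ => norm_nonneg _)
      rw [nsmul_eq_mul] at h1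
      exact h1.trans (h2.trans (hwindowS k hk))
    have hcardlt : 2 * (W.filter p).card < Δ := by
      have h3 : ((W.filter p).card : ℝ) ≤ 4 * M / lam := by
        rw [le_div_iff₀ hlam]; exact hcard1
      have h8 : 8 * M / lam = 2 * (4 * M / lam) := by ring
      have h4 : 2 * (((W.filter p).card : ℕ) : ℝ) < (Δ : ℝ) := by linarith
      exact_mod_cast h4
    have hcards : (W.filter p).card + (W.filter fun i => ¬p i).card = Δ := by
      rw [Finset.card_filter_add_card_filter_not, hWdef, Nat.card_Ico]
      omega
    have hle : (W.filter p).card ≤ (W.filter fun i => ¬p i).card := by omega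
    -- bound each factor
    have h1 : ∏ i ∈ W.filter p, (2 * β (i + 1) ^ 2) ≤ (2 * b ^ 2) ^ (W.filter p).card := by
      rw [← Finset.prod_const]
      refine Finset.prod_le_prod (fun i _ => by positivity) (fun i _ => ?_)
      nlinarith [hβnn i, hβb i]
    have h2 : ∏ i ∈ W.filter (fun i => ¬p i), (2 * β (i + 1) ^ 2)
        ≤ ((2 * b ^ 2)⁻¹) ^ (W.filter fun i => ¬p i).card := by
      rw [← Finset.prod_const]
      refine Finset.prod_le_prod (fun i _ => by positivity) (fun i hi => ?_)
      have hsi : ‖x (i + 1) - x i‖ ≤ lam := not_lt.1 (Finset.mem_filter.1 hi).2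
      have hβs : β (i + 1) ≤ 1 / (2 * b) := hprop i hsi
      have hβ2b : β (i + 1) * (2 * b) ≤ 1 :=
        (le_div_iff₀ (by positivity)).1 hβs
      rw [inv_eq_one_div, le_div_iff₀ (by positivity)]
      calc 2 * β (i + 1) ^ 2 * (2 * b ^ 2) = (β (i + 1) * (2 * b)) ^ 2 := by ring
        _ ≤ 1 := by nlinarith [mul_nonneg (hβnn i) (show (0:ℝ) ≤ 2 * b by positivity), hβ2b]
    have hpow : (2 * b ^ 2) ^ (W.filter p).card ≤ (2 * b ^ 2) ^ (W.filter fun i => ¬p i).card :=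
      pow_le_pow_right₀ h2b2 hle
    calc ∏ i ∈ W, (2 * β (i + 1) ^ 2)
        = (∏ i ∈ W.filter p, (2 * β (i + 1) ^ 2)) *
            ∏ i ∈ W.filter (fun i => ¬p i), (2 * β (i + 1) ^ 2) := hsplit.symm
      _ ≤ (2 * b ^ 2) ^ (W.filter p).card * ((2 * b ^ 2)⁻¹) ^ (W.filter fun i => ¬p i).card := by
          refine mul_le_mul h1 h2 (Finset.prod_nonneg fun i _ => by positivity) (by positivity)
      _ ≤ 1 := by
          rw [inv_pow, ← div_eq_mul_inv, div_le_one (by positivity)]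
          exact hpow
  -- one-step growth estimate
  have hone : ∀ l : ℕ, ‖d (l + 1)‖ ^ 2 ≤ 2 * γbar ^ 2 + (2 * β (l + 1) ^ 2) * ‖d l‖ ^ 2 := by
    intro l
    have h1 : ‖d (l + 1)‖ ≤ ‖v (l + 1)‖ + β (l + 1) * ‖d l‖ := by
      rw [hrec l]
      calc ‖v (l + 1) + β (l + 1) • d l‖ ≤ ‖v (l + 1)‖ + ‖β (l + 1) • d l‖ := norm_add_le _ _
        _ = ‖v (l + 1)‖ + β (l + 1) * ‖d l‖ := by
            rw [norm_smul, Real.norm_eq_abs, abs_of_nonneg (hβnn l)]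
    nlinarith [hv (l + 1), norm_nonneg (d l), norm_nonneg (v (l + 1)), norm_nonneg (d (l + 1)),
      hβnn l, mul_nonneg (hβnn l) (norm_nonneg (d l)),
      sq_nonneg (‖v (l + 1)‖ - β (l + 1) * ‖d l‖)]
  -- window growth estimate
  have hwin : ∀ k : ℕ, ∀ j : ℕ, ‖d (k + j)‖ ^ 2 ≤
      (∏ i ∈ Finset.Ico k (k + j), (2 * β (i + 1) ^ 2)) * ‖d k‖ ^ 2
        + 2 * γbar ^ 2 * j * (2 * b ^ 2) ^ j := by
    intro k j
    induction j with
    | zero => simp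
    | succ p ih =>
      have hIco : k + (p + 1) = (k + p) + 1 := rfl
      rw [hIco, Finset.prod_Ico_succ_top (Nat.le_add_right k p)]
      set c : ℝ := 2 * β (k + p + 1) ^ 2 with hcdef
      set B : ℝ := (2 * b ^ 2) ^ p with hBdef
      set P : ℝ := ∏ i ∈ Finset.Ico k (k + p), (2 * β (i + 1) ^ 2) with hPdef
      have h1 := hone (k + p)
      have hc0 : 0 ≤ c := by rw [hcdef]; positivity
      have hcb : c ≤ 2 * b ^ 2 := by
        rw [hcdef]; nlinarith [hβnn (k + p), hβb (k + p)]
      have hB1 : (1 : ℝ) ≤ B := by rw [hBdef]; exact one_le_pow₀ h2b2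
      have hBnn : (0 : ℝ) ≤ B := by linarith
      have hpnn : (0 : ℝ) ≤ (p : ℝ) := Nat.cast_nonneg p
      have hmul : c * ‖d (k + p)‖ ^ 2
          ≤ c * (P * ‖d k‖ ^ 2 + 2 * γbar ^ 2 * p * B) :=
        mul_le_mul_of_nonneg_left ih hc0
      have hA : c * ((p : ℝ) * B) ≤ 2 * b ^ 2 * ((p : ℝ) * B) :=
        mul_le_mul_of_nonneg_right hcb (mul_nonneg hpnn hBnn)
      have f1 : 2 * γbar ^ 2 * (c * ((p : ℝ) * B)) ≤ 2 * γbar ^ 2 * (2 * b ^ 2 * ((p : ℝ) * B)) :=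
        mul_le_mul_of_nonneg_left hA (by positivity)
      have hBB : (1 : ℝ) ≤ 2 * b ^ 2 * B := by nlinarith
      have f2 : 2 * γbar ^ 2 * 1 ≤ 2 * γbar ^ 2 * (2 * b ^ 2 * B) :=
        mul_le_mul_of_nonneg_left hBB (by positivity)
      calc ‖d (k + p + 1)‖ ^ 2 ≤ 2 * γbar ^ 2 + c * ‖d (k + p)‖ ^ 2 := h1
        _ ≤ 2 * γbar ^ 2 + c * (P * ‖d k‖ ^ 2 + 2 * γbar ^ 2 * p * B) := by linarith
        _ = P * c * ‖d k‖ ^ 2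
            + (2 * γbar ^ 2 * 1 + 2 * γbar ^ 2 * (c * ((p : ℝ) * B))) := by ring
        _ ≤ P * c * ‖d k‖ ^ 2
            + (2 * γbar ^ 2 * (2 * b ^ 2 * B) + 2 * γbar ^ 2 * (2 * b ^ 2 * ((p : ℝ) * B))) := by
              linarith
        _ = P * c * ‖d k‖ ^ 2 + 2 * γbar ^ 2 * ((p : ℕ) + 1 : ℕ) * (2 * b ^ 2) ^ (p + 1) := by
              rw [hBdef, pow_succ]
              push_cast
              ring
  -- per-window additive bound
  set C : ℝ := 2 * γbar ^ 2 * Δ * (2 * b ^ 2) ^ Δ with hCdef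
  have hCpos : 0 < C := by
    have : (0:ℝ) < (2 * b ^ 2) ^ Δ := by positivity
    positivity
  have hwinC : ∀ k, k₀ ≤ k → ‖d (k + Δ)‖ ^ 2 ≤ ‖d k‖ ^ 2 + C := by
    intro k hk
    have h1 := hwin k Δ
    have h2 := hprod k hk
    have hd2 : (0 : ℝ) ≤ ‖d k‖ ^ 2 := by positivity
    have h3 : (∏ i ∈ Finset.Ico k (k + Δ), (2 * β (i + 1) ^ 2)) * ‖d k‖ ^ 2 ≤ ‖d k‖ ^ 2 := by
      nlinarith [Finset.prod_nonneg (fun i (_ : i ∈ Finset.Ico k (k + Δ)) =>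
        (by positivity : (0:ℝ) ≤ 2 * β (i + 1) ^ 2))]
    rw [hCdef]
    linarith
  -- iterate over consecutive windows
  have hiter : ∀ m : ℕ, ‖d (k₀ + m * Δ)‖ ^ 2 ≤ ‖d k₀‖ ^ 2 + m * C := by
    intro m
    induction m with
    | zero => simp
    | succ p ih =>
      have heq : k₀ + (p + 1) * Δ = (k₀ + p * Δ) + Δ := by ring
      rw [heq]
      have := hwinC (k₀ + p * Δ) (Nat.le_add_right _ _)
      push_cast
      push_cast at ih
      linarith
  -- summability of the subsequence of 1/‖d k‖²
  have hsum_tail : Summable (fun k => ‖v (k + K)‖ ^ 4 / ‖d (k + K)‖ ^ 2) :=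
    (summable_nat_add_iff K).2 hsum
  have hsum_inv : Summable (fun k => 1 / ‖d (k + K)‖ ^ 2) := by
    refine Summable.of_nonneg_of_le (fun k => by positivity) (fun k => ?_)
      (hsum_tail.mul_left (ε ^ 4)⁻¹)
    have hVε : ε < ‖v (k + K)‖ := hK (k + K) (by omega)
    have h1 : (ε ^ 4)⁻¹ * (‖v (k + K)‖ ^ 4 / ‖d (k + K)‖ ^ 2)
        = (‖v (k + K)‖ ^ 4 / ε ^ 4) * (1 / ‖d (k + K)‖ ^ 2) := by ring
    rw [h1]
    have h2 : (1 : ℝ) ≤ ‖v (k + K)‖ ^ 4 / ε ^ 4 := by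
      rw [le_div_iff₀ (by positivity), one_mul]
      exact pow_le_pow_left₀ hε.le (le_of_lt hVε) 4
    exact le_mul_of_one_le_left (by positivity) h2
  have hinj : Function.Injective (fun m : ℕ => N₁ + m * Δ) := by
    intro a c h
    simp only at h
    exact Nat.eq_of_mul_eq_mul_right hΔpos (Nat.add_left_cancel h)
  have hsub : Summable (fun m : ℕ => 1 / ‖d (k₀ + m * Δ)‖ ^ 2) := by
    have h1 := hsum_inv.comp_injective hinj
    have h2 : ((fun k => 1 / ‖d (k + K)‖ ^ 2) ∘ fun m : ℕ => N₁ + m * Δ)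
        = fun m : ℕ => 1 / ‖d (k₀ + m * Δ)‖ ^ 2 := by
      funext m
      simp only [Function.comp_apply]
      congr 2
      rw [hk₀def]
      ring
    rwa [h2] at h1
  -- divergence contradiction
  set D0 : ℝ := ‖d k₀‖ ^ 2 with hD0def
  have hD0 : 0 < D0 := by
    have := hd_pos k₀
    positivity
  set E : ℝ := D0 + C with hEdef
  have hE : 0 < E := by positivity
  have hlow : ∀ m : ℕ, 1 / (E * (m + 1)) ≤ 1 / ‖d (k₀ + m * Δ)‖ ^ 2 := by
    intro m
    apply one_div_le_one_div_of_le
    · have := hd_pos (k₀ + m * Δ); positivity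
    · calc ‖d (k₀ + m * Δ)‖ ^ 2 ≤ D0 + m * C := hiter m
        _ ≤ E * (m + 1) := by
            rw [hEdef]
            have : (0:ℝ) ≤ (m:ℝ) := Nat.cast_nonneg m
            nlinarith
  have hsum_low : Summable (fun m : ℕ => 1 / (E * ((m : ℝ) + 1))) :=
    Summable.of_nonneg_of_le (fun m => by positivity) hlow hsub
  have hsum_harm : Summable (fun m : ℕ => 1 / ((m : ℝ) + 1)) := by
    have h1 := hsum_low.mul_left E
    have h2 : (fun m : ℕ => E * (1 / (E * ((m : ℝ) + 1)))) = fun m : ℕ => 1 / ((m : ℝ) + 1) := by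
      funext m
      field_simp
    rwa [h2] at h1
  have h3 : (fun m : ℕ => 1 / ((m : ℝ) + 1)) = (fun m : ℕ => 1 / (((m + 1 : ℕ) : ℝ))) := by
    funext m; push_cast; ring
  rw [h3] at hsum_harm
  exact Real.not_summable_one_div_natCast ((summable_nat_add_iff 1).1 hsum_harm)
end

section
/- Let aᵢ, bᵢ : ℝⁿ → ℝⁿ, i = 1, …, m, be continuous maps with aᵢ(x) ≤ bᵢ(x) componentwise for every x ∈ ℝⁿ. For x ∈ ℝⁿ define F_x(v) := max_{1≤i≤m} (½⟨aᵢ(x) + bᵢ(x), v⟩ + ½⟨bᵢ(x) − aᵢ(x), |v|⟩) and ξ(x) := inf_{v ∈ ℝⁿ} (F_x(v) + ½‖v‖²). Then for every x the infimum is attained, and the function ξ : ℝⁿ → ℝ is continuous on ℝⁿ. -/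
open RealInnerProductSpace Filter Topology

/-!
Write `C = ‖a‖ + ‖b‖` (sup norms over `i`). Each `ḡᵢ` is linear in the data `(a, b)` and bounded
by `C‖v‖`, so the objective `F(v) + ½‖v‖²` is at least `‖v‖ (½‖v‖ - C)`: it is coercive, attains
its minimum, and every minimizer lies in the ball of radius `2C`. Linearity also gives
`F_{a,b}(v) - F_{a',b'}(v) ≤ (‖a - a'‖ + ‖b - b'‖) ‖v‖`; evaluating at a minimizer of the other
problem yields a locally Lipschitz bound for `ξ` in the data, and `ξ(x)` is `ξ` composed with the
continuous map `x ↦ (a(x), b(x))`.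
-/

local notation "E" n => EuclideanSpace ℝ (Fin n)

section

variable {n m : ℕ}

theorem norm_vabs (v : E n) : ‖vabs v‖ = ‖v‖ := by
  simp [EuclideanSpace.norm_eq, vabs]

@[fun_prop]
theorem continuous_vabs : Continuous (vabs (n := n)) := by
  unfold vabs; fun_prop

theorem vabs_zero : vabs (0 : E n) = 0 := by
  ext j; simp [vabs]

theorem gbar_sub (a b a' b' : Fin m → E n) (i : Fin m) (v : E n) :
    gbar a b i v - gbar a' b' i v = gbar (a - a') (b - b') i v := by
  simp only [gbar, Pi.sub_apply, inner_sub_left, inner_add_left]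
  ring

theorem abs_gbar_le (a b : Fin m → E n) (i : Fin m) (v : E n) :
    |gbar a b i v| ≤ (‖a‖ + ‖b‖) * ‖v‖ := by
  have hplus : |⟪a i + b i, v⟫| ≤ (‖a‖ + ‖b‖) * ‖v‖ :=
    (abs_real_inner_le_norm _ _).trans <| by
      gcongr; exact (norm_add_le _ _).trans (add_le_add (norm_le_pi_norm a i) (norm_le_pi_norm b i))
  have hminus : |⟪b i - a i, vabs v⟫| ≤ (‖a‖ + ‖b‖) * ‖v‖ :=
    (abs_real_inner_le_norm _ _).trans <| by
      rw [norm_vabs, add_comm ‖a‖]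
      gcongr; exact (norm_sub_le _ _).trans (add_le_add (norm_le_pi_norm b i) (norm_le_pi_norm a i))
  unfold gbar
  rw [abs_le] at hplus hminus ⊢
  constructor <;> linarith [hplus.1, hplus.2, hminus.1, hminus.2]

theorem gbar_zero (a b : Fin m → E n) (i : Fin m) : gbar a b i 0 = 0 := by
  simp [gbar, vabs_zero]

variable (hm : 0 < m)

theorem le_fsup (f : Fin m → ℝ) (i : Fin m) : f i ≤ fsup hm f :=
  Finset.le_sup' _ (Finset.mem_univ i)

theorem fsup_le {f : Fin m → ℝ} {c : ℝ} (h : ∀ i, f i ≤ c) : fsup hm f ≤ c :=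
  Finset.sup'_le _ _ fun i _ => h i

theorem fsup_const (c : ℝ) : fsup hm (fun _ => c) = c :=
  Finset.sup'_const _ c

theorem continuous_Fmax (a b : Fin m → E n) : Continuous (Fmax hm a b) := by
  unfold Fmax fsup
  exact Continuous.finset_sup'_apply _ fun i _ => by unfold gbar; fun_prop

theorem Fmax_sub_le (a b a' b' : Fin m → E n) (v : E n) :
    Fmax hm a b v - Fmax hm a' b' v ≤ (‖a - a'‖ + ‖b - b'‖) * ‖v‖ := by
  rw [sub_le_iff_le_add]
  refine fsup_le hm fun i => ?_
  have hi := le_fsup hm (fun j => gbar a' b' j v) i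
  have hdiff := (le_abs_self _).trans (abs_gbar_le (a - a') (b - b') i v)
  rw [← gbar_sub] at hdiff
  simp only [Fmax] at hi ⊢
  linarith

theorem Fmax_zero (a b : Fin m → E n) : Fmax hm a b 0 = 0 := by
  simp only [Fmax, gbar_zero, fsup_const]

theorem neg_mul_norm_le_Fmax (a b : Fin m → E n) (v : E n) :
    -((‖a‖ + ‖b‖) * ‖v‖) ≤ Fmax hm a b v :=
  (neg_le_of_abs_le (abs_gbar_le a b ⟨0, hm⟩ v)).trans (le_fsup hm (fun i => gbar a b i v) _)

noncomputable def subproblemObjective (a b : Fin m → E n) (v : E n) : ℝ :=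
  Fmax hm a b v + (1 / 2) * ‖v‖ ^ 2

theorem continuous_subproblemObjective (a b : Fin m → E n) :
    Continuous (subproblemObjective hm a b) := by
  unfold subproblemObjective
  have := continuous_Fmax hm a b
  fun_prop

theorem subproblemObjective_zero (a b : Fin m → E n) : subproblemObjective hm a b 0 = 0 := by
  simp [subproblemObjective, Fmax_zero]

theorem subproblemObjective_ge (a b : Fin m → E n) (v : E n) :
    ‖v‖ * ((1 / 2) * ‖v‖ - (‖a‖ + ‖b‖)) ≤ subproblemObjective hm a b v := by
  have := neg_mul_norm_le_Fmax hm a b v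
  unfold subproblemObjective
  linarith

theorem exists_forall_subproblemObjective_le (a b : Fin m → E n) :
    ∃ v₀, ∀ v, subproblemObjective hm a b v₀ ≤ subproblemObjective hm a b v := by
  refine (continuous_subproblemObjective hm a b).exists_forall_le' 0 ?_
  filter_upwards [tendsto_norm_cocompact_atTop.eventually_ge_atTop (2 * (‖a‖ + ‖b‖))] with v hv
  rw [subproblemObjective_zero]
  exact (mul_nonneg (norm_nonneg v) (by linarith)).trans (subproblemObjective_ge hm a b v)

theorem norm_le_of_forall_subproblemObjective_le {a b : Fin m → E n} {v₀ : E n}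
    (hv₀ : ∀ v, subproblemObjective hm a b v₀ ≤ subproblemObjective hm a b v) :
    ‖v₀‖ ≤ 2 * (‖a‖ + ‖b‖) := by
  have hle := (subproblemObjective_ge hm a b v₀).trans (hv₀ 0)
  rw [subproblemObjective_zero] at hle
  by_contra! hlt
  have hC : 0 ≤ ‖a‖ + ‖b‖ := by positivity
  exact hle.not_gt (mul_pos (by linarith) (by linarith))

theorem iInf_subproblemObjective_eq {a b : Fin m → E n} {v₀ : E n}
    (hv₀ : ∀ v, subproblemObjective hm a b v₀ ≤ subproblemObjective hm a b v) :
    ⨅ v, subproblemObjective hm a b v = subproblemObjective hm a b v₀ :=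
  le_antisymm (ciInf_le ⟨_, Set.forall_mem_range.2 hv₀⟩ v₀) (le_ciInf hv₀)

/-- The optimal value `ξ` of the direction-finding subproblem, as a function of the endpoint data
`(aᵢ(x), bᵢ(x))ᵢ` rather than of `x`. -/
noncomputable def subproblemValue (a b : Fin m → E n) : ℝ :=
  ⨅ v, subproblemObjective hm a b v

theorem subproblemValue_sub_le (a b a' b' : Fin m → E n) :
    subproblemValue hm a b - subproblemValue hm a' b' ≤
      (‖a - a'‖ + ‖b - b'‖) * (2 * (‖a'‖ + ‖b'‖)) := by
  obtain ⟨v, hv⟩ := exists_forall_subproblemObjective_le hm a b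
  obtain ⟨w, hw⟩ := exists_forall_subproblemObjective_le hm a' b'
  have hw_norm := norm_le_of_forall_subproblemObjective_le hm hw
  unfold subproblemValue
  rw [iInf_subproblemObjective_eq hm hv, iInf_subproblemObjective_eq hm hw]
  calc subproblemObjective hm a b v - subproblemObjective hm a' b' w
      ≤ subproblemObjective hm a b w - subproblemObjective hm a' b' w := by linarith [hv w]
    _ = Fmax hm a b w - Fmax hm a' b' w := by unfold subproblemObjective; ring
    _ ≤ (‖a - a'‖ + ‖b - b'‖) * ‖w‖ := Fmax_sub_le hm a b a' b' w
    _ ≤ (‖a - a'‖ + ‖b - b'‖) * (2 * (‖a'‖ + ‖b'‖)) := by gcongr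

theorem continuous_subproblemValue :
    Continuous fun p : (Fin m → E n) × (Fin m → E n) => subproblemValue hm p.1 p.2 := by
  refine continuous_iff_continuousAt.2 fun p₀ => ?_
  set bound := fun p : (Fin m → E n) × (Fin m → E n) =>
    (‖p.1 - p₀.1‖ + ‖p.2 - p₀.2‖) * (2 * (‖p.1‖ + ‖p.2‖ + ‖p₀.1‖ + ‖p₀.2‖))
  have hbound : ∀ p, |subproblemValue hm p.1 p.2 - subproblemValue hm p₀.1 p₀.2| ≤ bound p := by
    intro p
    have h₁ := subproblemValue_sub_le hm p.1 p.2 p₀.1 p₀.2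
    have h₂ := subproblemValue_sub_le hm p₀.1 p₀.2 p.1 p.2
    rw [norm_sub_rev p₀.1, norm_sub_rev p₀.2] at h₂
    have hδ : 0 ≤ ‖p.1 - p₀.1‖ + ‖p.2 - p₀.2‖ := by positivity
    rw [abs_le]
    constructor <;> nlinarith [norm_nonneg p.1, norm_nonneg p.2, norm_nonneg p₀.1, norm_nonneg p₀.2]
  have hlim : Tendsto bound (𝓝 p₀) (𝓝 0) := by
    have : Continuous bound := by fun_prop
    simpa [bound] using this.tendsto p₀
  rw [ContinuousAt, tendsto_iff_dist_tendsto_zero]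
  exact squeeze_zero (fun _ => dist_nonneg) hbound hlim

end

theorem xi_attained_and_continuous_general {n m : ℕ} (hm : 0 < m)
    (a b : Fin m → EuclideanSpace ℝ (Fin n) → EuclideanSpace ℝ (Fin n))
    (ha : ∀ i, Continuous (a i)) (hb : ∀ i, Continuous (b i)) :
    (∀ x : EuclideanSpace ℝ (Fin n), ∃ v₀ : EuclideanSpace ℝ (Fin n),
      (∀ v, Fmax hm (fun i => a i x) (fun i => b i x) v₀ + (1 / 2) * ‖v₀‖ ^ 2 ≤
        Fmax hm (fun i => a i x) (fun i => b i x) v + (1 / 2) * ‖v‖ ^ 2) ∧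
      (⨅ v : EuclideanSpace ℝ (Fin n),
          (Fmax hm (fun i => a i x) (fun i => b i x) v + (1 / 2) * ‖v‖ ^ 2)) =
        Fmax hm (fun i => a i x) (fun i => b i x) v₀ + (1 / 2) * ‖v₀‖ ^ 2) ∧
    Continuous (fun x : EuclideanSpace ℝ (Fin n) =>
      ⨅ v : EuclideanSpace ℝ (Fin n),
        (Fmax hm (fun i => a i x) (fun i => b i x) v + (1 / 2) * ‖v‖ ^ 2)) := by
  refine ⟨fun x => ?_, ?_⟩
  · obtain ⟨v₀, hv₀⟩ := exists_forall_subproblemObjective_le hm (fun i => a i x) (fun i => b i x)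
    exact ⟨v₀, hv₀, iInf_subproblemObjective_eq hm hv₀⟩
  · have hdata : Continuous fun x => ((fun i => a i x, fun i => b i x) :
        (Fin m → EuclideanSpace ℝ (Fin n)) × (Fin m → EuclideanSpace ℝ (Fin n))) :=
      (continuous_pi ha).prodMk (continuous_pi hb)
    -- elaborated without the expected type: unifying against it would unfold `⨅`
    exact ((continuous_subproblemValue hm).comp hdata :)

/-- Part (v) of the descent-direction-finding lemma: with continuous endpoint maps
`aᵢ, bᵢ : ℝⁿ → ℝⁿ`, the infimum `ξ(x) = inf_v (F_x(v) + ½‖v‖²)` is attained for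
every `x`, and `ξ` is continuous on `ℝⁿ`. -/
theorem xi_attained_and_continuous {n m : ℕ} (hm : 0 < m)
    (a b : Fin m → EuclideanSpace ℝ (Fin n) → EuclideanSpace ℝ (Fin n))
    (ha : ∀ i, Continuous (a i)) (hb : ∀ i, Continuous (b i))
    (hab : ∀ i x j, a i x j ≤ b i x j) :
    (∀ x : EuclideanSpace ℝ (Fin n), ∃ v₀ : EuclideanSpace ℝ (Fin n),
      (∀ v, Fmax hm (fun i => a i x) (fun i => b i x) v₀ + (1 / 2) * ‖v₀‖ ^ 2 ≤
        Fmax hm (fun i => a i x) (fun i => b i x) v + (1 / 2) * ‖v‖ ^ 2) ∧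
      (⨅ v : EuclideanSpace ℝ (Fin n),
          (Fmax hm (fun i => a i x) (fun i => b i x) v + (1 / 2) * ‖v‖ ^ 2)) =
        Fmax hm (fun i => a i x) (fun i => b i x) v₀ + (1 / 2) * ‖v₀‖ ^ 2) ∧
    Continuous (fun x : EuclideanSpace ℝ (Fin n) =>
      ⨅ v : EuclideanSpace ℝ (Fin n),
        (Fmax hm (fun i => a i x) (fun i => b i x) v + (1 / 2) * ‖v‖ ^ 2)) :=
  xi_attained_and_continuous_general hm a b ha hb
end
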